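/- arXiv:1107.4129 — 3 statements merged into one kernel-verified Lean document; each statement's English description precedes it below -/
import Mathlib

section
/- Every finitely generated nilpotent group contains a torsion-free subgroup of finite index. -/
/-!
Take `N` maximal among the torsion-free normal subgroups (Zorn). For `z` central in `G ⧸ N`, the
preimage of `⟨z⟩` is normal and strictly larger than `N`, so it contains a torsion element outside
`N`; its image is a nontrivial power of `z`, hence `z` has finite order. So `G ⧸ N` is a finitely
generated nilpotent group with torsion center. In such a group `H`, the center of `H ⧸ Z(H)` is
again torsion: if `z` is central modulo `Z(H)`, then `g ↦ ⁅z, g⁆` is a homomorphism into `Z(H)`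
whose image is a finitely generated torsion abelian group, hence has finite exponent `e`, and
`z ^ e` is central. Induction on the nilpotency class then shows that `H` is torsion, and a
finitely generated torsion nilpotent group is finite, again by induction on the class. Thus `N`
has finite index.
-/

def Monoid.IsTorsionFree (G : Type*) [Monoid G] : Prop :=
  ∀ g : G, g ≠ 1 → ¬IsOfFinOrder g

open Subgroup
open scoped commutatorElement IsMulCommutative

theorem IsOfFinOrder.of_zpow {G : Type*} [Group G] {x : G} {k : ℤ} (h : IsOfFinOrder (x ^ k))
    (hk : k ≠ 0) : IsOfFinOrder x := by
  obtain ⟨n, rfl | rfl⟩ := Int.eq_nat_or_neg k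
  · rw [zpow_natCast] at h
    exact h.of_pow (by simpa using hk)
  · rw [zpow_neg, isOfFinOrder_inv_iff, zpow_natCast] at h
    exact h.of_pow (by simpa using hk)

theorem Subgroup.isTorsionFree_iff {G : Type*} [Group G] {N : Subgroup G} :
    Monoid.IsTorsionFree N ↔ ∀ x ∈ N, IsOfFinOrder x → x = 1 := by
  refine ⟨fun h x hx hfin => ?_, fun h x hx1 hfin => hx1 (Subtype.ext ?_)⟩
  · by_contra hx1
    exact h ⟨x, hx⟩ (by simpa using hx1) (Submonoid.isOfFinOrder_coe.mp hfin)
  · exact h x x.2 (Submonoid.isOfFinOrder_coe.mpr hfin)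

section Commutator

variable {G : Type*} [Group G]

theorem commutatorElement_mem_center_of_mk_mem_center {z : G}
    (hz : (z : G ⧸ center G) ∈ center (G ⧸ center G)) (g : G) : ⁅z, g⁆ ∈ center G := by
  rw [← QuotientGroup.eq_one_iff, ← QuotientGroup.mk'_apply, map_commutatorElement]
  exact commutatorElement_eq_one_iff_mul_comm.mpr (mem_center_iff.mp hz g).symm

theorem commutatorElement_pow_left_of_mem_center {z g : G} (h : ⁅z, g⁆ ∈ center G) (n : ℕ) :
    ⁅z ^ n, g⁆ = ⁅z, g⁆ ^ n := by
  induction n with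
  | zero => simp
  | succ n ih =>
    have hconj : z * ⁅z, g⁆ ^ n * z⁻¹ = ⁅z, g⁆ ^ n := by
      rw [← (pow_mem h n).comm z, mul_inv_cancel_right]
    calc ⁅z ^ (n + 1), g⁆ = z * ⁅z ^ n, g⁆ * z⁻¹ * ⁅z, g⁆ := by
          simp only [commutatorElement_def]; group
      _ = ⁅z, g⁆ ^ (n + 1) := by rw [ih, hconj, pow_succ]

def commutatorLeftHom (z : G) (hz : ∀ g, ⁅z, g⁆ ∈ center G) : G →* center G where
  toFun g := ⟨⁅z, g⁆, hz g⟩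
  map_one' := by ext; simp
  map_mul' g h := by
    ext
    calc ⁅z, g * h⁆ = ⁅z, g⁆ * (g * ⁅z, h⁆ * g⁻¹) := by
          simp only [commutatorElement_def]; group
      _ = ⁅z, g⁆ * ⁅z, h⁆ := by rw [← (hz h).comm g, mul_inv_cancel_right]

end Commutator

theorem isMulTorsion_center_quotient_center {G : Type*} [Group G] [Group.FG G]
    (h : IsMulTorsion (center G)) : IsMulTorsion (center (G ⧸ center G)) := by
  rintro ⟨x, hx⟩
  obtain ⟨z, rfl⟩ := QuotientGroup.mk_surjective x
  have hcomm := commutatorElement_mem_center_of_mk_mem_center hx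
  have : Finite (commutatorLeftHom z hcomm).range :=
    CommGroup.finite_of_fg_isMulTorsion _ (h.subgroup _)
  set e := Monoid.exponent (commutatorLeftHom z hcomm).range
  have hzpow : z ^ e ∈ center G := by
    refine mem_center_iff.mpr fun g => (commutatorElement_eq_one_iff_mul_comm.mp ?_).symm
    rw [commutatorElement_pow_left_of_mem_center (hcomm g)]
    have := Monoid.pow_exponent_eq_one
      (⟨commutatorLeftHom z hcomm g, g, rfl⟩ : (commutatorLeftHom z hcomm).range)
    exact congrArg (fun y : (commutatorLeftHom z hcomm).range => ((y : center G) : G)) this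
  refine Submonoid.isOfFinOrder_coe.mp (isOfFinOrder_iff_pow_eq_one.mpr
    ⟨e, Nat.pos_of_ne_zero Monoid.exponent_ne_zero_of_finite, ?_⟩)
  rw [← QuotientGroup.mk_pow, QuotientGroup.eq_one_iff]
  exact hzpow

namespace Group.IsNilpotent

theorem isMulTorsion_of_isMulTorsion_center {G : Type*} [Group G] [IsNilpotent G] [FG G]
    (h : IsMulTorsion (center G)) : IsMulTorsion G := by
  refine nilpotent_center_quotient_ind
    (P := fun G _ _ => ∀ [FG G], IsMulTorsion (center G) → IsMulTorsion G) G ?_ ?_ h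
  · intro G _ _ _ _ g
    simp [Subsingleton.elim g 1]
  · intro G _ _ ih _ h
    exact IsMulTorsion.extension_closed (QuotientGroup.ker_mk' (center G)).symm
      (ih (isMulTorsion_center_quotient_center h)) h

theorem finite_of_isMulTorsion {G : Type*} [Group G] [IsNilpotent G] [FG G]
    (h : IsMulTorsion G) : Finite G := by
  refine nilpotent_center_quotient_ind
    (P := fun G _ _ => ∀ [FG G], IsMulTorsion G → Finite G) G ?_ ?_ h
  · intro G _ _ _ _
    infer_instance
  · intro G _ _ ih _ h
    have : Finite (G ⧸ center G) := ih (h.of_surjective (QuotientGroup.mk'_surjective _))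
    -- by Schreier's lemma, `center G` is then finitely generated
    have : (center G).FiniteIndex := finiteIndex_of_finite_quotient
    have : Finite (center G) := CommGroup.finite_of_fg_isMulTorsion _ (h.subgroup _)
    exact Finite.of_subgroup_quotient (center G)

end Group.IsNilpotent

section MaximalTorsionFree

variable {G : Type*} [Group G]

theorem Subgroup.normal_of_le_center {H : Subgroup G} (h : H ≤ center G) : H.Normal :=
  ⟨fun x hx g => by rwa [← (h hx).comm g, mul_inv_cancel_right]⟩

theorem exists_maximal_normal_isTorsionFree :
    ∃ N : Subgroup G, Maximal (fun N : Subgroup G => N.Normal ∧ Monoid.IsTorsionFree N) N := by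
  set S := {N : Subgroup G | N.Normal ∧ Monoid.IsTorsionFree N}
  have hbot : ⊥ ∈ S := ⟨inferInstance, isTorsionFree_iff.mpr fun x hx _ => mem_bot.mp hx⟩
  have hchain : ∀ c ⊆ S, IsChain (· ≤ ·) c → ∀ N₀ ∈ c, ∃ ub ∈ S, ∀ N ∈ c, N ≤ ub := by
    intro c hc hchain N₀ hN₀
    have hmem {x : G} : x ∈ sSup c ↔ ∃ N ∈ c, x ∈ N :=
      mem_sSup_of_directedOn ⟨N₀, hN₀⟩ hchain.directedOn
    refine ⟨sSup c, ⟨⟨fun x hx g => ?_⟩, isTorsionFree_iff.mpr fun x hx hfin => ?_⟩,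
      fun N hN => le_sSup hN⟩
    · obtain ⟨N, hNc, hxN⟩ := hmem.mp hx
      exact le_sSup hNc ((hc hNc).1.conj_mem x hxN g)
    · obtain ⟨N, hNc, hxN⟩ := hmem.mp hx
      exact isTorsionFree_iff.mp (hc hNc).2 x hxN hfin
  obtain ⟨N, -, hN⟩ := zorn_le_nonempty₀ S hchain ⊥ hbot
  exact ⟨N, hN⟩

theorem isMulTorsion_center_quotient_of_maximal {N : Subgroup G} [N.Normal]
    (htf : Monoid.IsTorsionFree N)
    (hmax : ∀ M : Subgroup G, M.Normal → Monoid.IsTorsionFree M → N ≤ M → M ≤ N) :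
    IsMulTorsion (center (G ⧸ N)) := by
  rintro ⟨z, hz⟩
  refine Submonoid.isOfFinOrder_coe.mp ?_
  obtain ⟨g, rfl⟩ := QuotientGroup.mk_surjective z
  by_cases hg : g ∈ N
  · simp [(QuotientGroup.eq_one_iff g).mpr hg]
  set P := (zpowers (g : G ⧸ N)).comap (QuotientGroup.mk' N)
  have hP : P.Normal := (normal_of_le_center (zpowers_le.mpr hz)).comap _
  have hNP : N ≤ P := fun x hx => by simp [P, (QuotientGroup.eq_one_iff x).mpr hx]
  obtain ⟨x, hxP, hfin, hx1⟩ : ∃ x ∈ P, IsOfFinOrder x ∧ x ≠ 1 := by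
    by_contra! hP'
    exact hg (hmax P hP (isTorsionFree_iff.mpr hP') hNP (mem_zpowers _))
  have hxN : x ∉ N := fun hxN => hx1 (isTorsionFree_iff.mp htf x hxN hfin)
  obtain ⟨k, hk⟩ := mem_zpowers_iff.mp hxP
  refine IsOfFinOrder.of_zpow (k := k) ?_ ?_
  · rw [hk]
    exact (QuotientGroup.mk' N).isOfFinOrder hfin
  · rintro rfl
    exact hxN ((QuotientGroup.eq_one_iff x).mp (by simpa using hk.symm))

end MaximalTorsionFree

theorem stmt5 {G : Type*} [Group G] [Group.IsNilpotent G] [Group.FG G] :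
    ∃ H : Subgroup G, H.FiniteIndex ∧ Monoid.IsTorsionFree H := by
  obtain ⟨N, hN⟩ := exists_maximal_normal_isTorsionFree (G := G)
  obtain ⟨_, htf⟩ := hN.prop
  have hZ : IsMulTorsion (center (G ⧸ N)) :=
    isMulTorsion_center_quotient_of_maximal htf fun M hM htfM => hN.le_of_ge ⟨hM, htfM⟩
  have : Finite (G ⧸ N) := Group.IsNilpotent.finite_of_isMulTorsion
    (Group.IsNilpotent.isMulTorsion_of_isMulTorsion_center hZ)
  exact ⟨N, finiteIndex_of_finite_quotient, htf⟩
end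

section
/- Let α be an algebraic integer with |α| = 1 such that every Galois conjugate of α (i.e., every root of its minimal polynomial over ℚ) also has absolute value 1. Then α is a root of unity. -/
/-! The conjugates of `α` are its images under the complex embeddings of the number field
`ℚ(α)`. The powers of `α` are algebraic integers of `ℚ(α)` all of whose conjugates have absolute
value `1`; there are only finitely many such (their minimal polynomials have bounded integer
coefficients), so two powers coincide and `α` is a root of unity. -/

open IntermediateField Polynomial

theorem IntermediateField.AdjoinSimple.isIntegral_int_gen {E : Type*} [Field E] [CharZero E]
    {α : E} (h : IsIntegral ℤ α) : IsIntegral ℤ (AdjoinSimple.gen ℚ α) := by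
  rwa [← isIntegral_algebraMap_iff (algebraMap ℚ⟮α⟯ E).injective, AdjoinSimple.algebraMap_gen]

theorem IntermediateField.aeval_ringHom_gen_minpoly {E L : Type*} [Field E] [CharZero E]
    [Field L] [CharZero L] (α : E) (φ : ℚ⟮α⟯ →+* L) :
    aeval (φ (AdjoinSimple.gen ℚ α)) (minpoly ℚ α) = 0 := by
  rw [← minpoly_gen]
  exact minpoly.aeval_algHom ℚ φ.toRatAlgHom _

theorem stmt9_general (α : ℂ) (hint : IsIntegral ℤ α)
    (hconj : ∀ β : ℂ, Polynomial.aeval β (minpoly ℚ α) = 0 → ‖β‖ = 1) :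
    ∃ n : ℕ, 0 < n ∧ α ^ n = 1 := by
  have : FiniteDimensional ℚ ℚ⟮α⟯ := adjoin.finiteDimensional hint.tower_top
  have : NumberField ℚ⟮α⟯ := {}
  obtain ⟨n, hn, hpow⟩ := NumberField.Embeddings.pow_eq_one_of_norm_eq_one ℚ⟮α⟯ ℂ
    (AdjoinSimple.isIntegral_int_gen hint) fun φ ↦ hconj _ (aeval_ringHom_gen_minpoly α φ)
  exact ⟨n, hn, by simpa using congrArg ((↑) : ℚ⟮α⟯ → ℂ) hpow⟩

/-- Kronecker's theorem: an algebraic integer of absolute value 1, all of whose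
Galois conjugates have absolute value 1, is a root of unity. -/
theorem stmt9 (α : ℂ) (hint : IsIntegral ℤ α) (habs : ‖α‖ = 1)
    (hconj : ∀ β : ℂ, Polynomial.aeval β (minpoly ℚ α) = 0 → ‖β‖ = 1) :
    ∃ n : ℕ, 0 < n ∧ α ^ n = 1 :=
  stmt9_general α hint hconj
end

section
/- Let N be a finitely generated torsion-free nilpotent group of nilpotency class k, and let φ be an automorphism of N that acts trivially on the abelianization N^{ab}. Then for each g ∈ N, there is a constant M (depending on g) such that ℓ(φ^n(g)) ≤ M·n^{k-1} for all n ≥ 1, where ℓ is word length with respect to a fixed finite generating set. In particular K_φ = 1. -/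
open Filter Topology
open scoped commutatorElement

/-- Word length of `g` with respect to a generating set `S`. -/
noncomputable def wordLength {G : Type*} [Group G] (S : Set G) (g : G) : ℕ :=
  sInf {n | ∃ l : List G, (∀ x ∈ l, x ∈ S ∨ x⁻¹ ∈ S) ∧ l.length = n ∧ l.prod = g}

/-- The word-growth entropy `K_φ = max_{s ∈ S} lim_n ℓ(φⁿ(s))^{1/n}` of an
automorphism `φ`, with respect to the generating set `S`. -/
noncomputable def entropy {G : Type*} [Group G] (S : Set G) (φ : MulAut G) : ℝ :=
  ⨆ s ∈ S, Filter.limsup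
    (fun n : ℕ => ((max (wordLength S ((φ ^ n) s)) 1 : ℕ) : ℝ) ^ (1 / (n : ℝ)))
    Filter.atTop

/-!
Write `D x = φ x * x⁻¹`. Mathlib indexes the lower central series from `γ₀ = ⊤`, so the
hypothesis says `D x ∈ γ₁` and the class `k` means `γₖ = ⊥`. By the three subgroups lemma
`⁅γᵢ, γⱼ⁆ ≤ γᵢ₊ⱼ₊₁`, an automorphism trivial on `N/γ₁` is trivial on every `γᵢ/γᵢ₊₁`; hence
`Dʲ g ∈ γⱼ` and `Dᵏ g = 1`. Since `φⁿ⁺¹ x = φⁿ (D x) * φⁿ x`, subadditivity of word length and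
induction on the number of nontrivial `Dʲ g` give `ℓ(φⁿ g) ≤ B (n + 1)ᵏ⁻¹`, with `B` bounding
the `ℓ(Dʲ g)`. Polynomial growth makes `ℓ(φⁿ s)^(1/n) → 1`, so the entropy is `1`.
-/

section LowerCentralSeries

variable {G : Type*} [Group G]

theorem Subgroup.commutator_commutator_le_of_rotate {H₁ H₂ H₃ N : Subgroup G} [N.Normal]
    (h1 : ⁅⁅H₂, H₃⁆, H₁⁆ ≤ N) (h2 : ⁅⁅H₃, H₁⁆, H₂⁆ ≤ N) : ⁅⁅H₁, H₂⁆, H₃⁆ ≤ N := by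
  simp only [← QuotientGroup.ker_mk' N, ← Subgroup.map_eq_bot_iff, Subgroup.map_commutator]
    at h1 h2 ⊢
  exact Subgroup.commutator_commutator_eq_bot_of_rotate h1 h2

theorem Subgroup.commutator_lowerCentralSeries_le (i j : ℕ) :
    ⁅(⊤ : Subgroup G).lowerCentralSeries i, (⊤ : Subgroup G).lowerCentralSeries j⁆ ≤
      (⊤ : Subgroup G).lowerCentralSeries (i + j + 1) := by
  induction j generalizing i with
  | zero => rfl
  | succ j ih =>
    rw [Subgroup.lowerCentralSeries_succ, Subgroup.commutator_comm]
    refine Subgroup.commutator_commutator_le_of_rotate ?_ ?_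
    · rw [Subgroup.commutator_comm ⊤, ← Subgroup.lowerCentralSeries_succ]
      exact (ih (i + 1)).trans
        (Subgroup.lowerCentralSeries_antitone _ (by omega : i + j + 2 ≤ i + 1 + j + 1))
    · exact Subgroup.commutator_mono (ih i) le_rfl

theorem QuotientGroup.commute_mk_of_commutatorElement_mem {N : Subgroup G} [N.Normal] {x y : G}
    (h : ⁅x, y⁆ ∈ N) : Commute (x : G ⧸ N) y :=
  commutatorElement_eq_one_iff_commute.mp <|
    (map_commutatorElement (QuotientGroup.mk' N) x y).symm.trans
      ((QuotientGroup.eq_one_iff _).mpr h)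

theorem mk_mem_center_of_mem_lowerCentralSeries {i : ℕ} {x : G}
    (hx : x ∈ (⊤ : Subgroup G).lowerCentralSeries i) :
    (x : G ⧸ (⊤ : Subgroup G).lowerCentralSeries (i + 1)) ∈ Subgroup.center _ := by
  refine Subgroup.mem_center_iff.mpr fun w => ?_
  induction w using QuotientGroup.induction_on with | H w => ?_
  exact (QuotientGroup.commute_mk_of_commutatorElement_mem
    (Subgroup.commutator_mem_commutator hx (Subgroup.mem_top w))).symm.eq

end LowerCentralSeries

theorem commutatorElement_mul_mul_of_mem_center {Q : Type*} [Group Q] {a y b z : Q}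
    (ha : a ∈ Subgroup.center Q) (hyb : Commute y b) (hyz : ⁅y, z⁆ ∈ Subgroup.center Q) :
    ⁅a * y, b * z⁆ = ⁅y, z⁆ :=
  calc ⁅a * y, b * z⁆ = a * (y * b * z * y⁻¹) * a⁻¹ * (b * z)⁻¹ := by group
    _ = y * b * z * y⁻¹ * (b * z)⁻¹ := by rw [← Subgroup.mem_center_iff.mp ha]; group
    _ = b * ⁅y, z⁆ * b⁻¹ := by rw [hyb.eq, commutatorElement_def]; group
    _ = ⁅y, z⁆ := by rw [Subgroup.mem_center_iff.mp hyz b]; group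

section Displacement

variable {G : Type*} [Group G]

def displacement (φ : MulAut G) (x : G) : G := φ x * x⁻¹

theorem displacement_mul_self (φ : MulAut G) (x : G) : displacement φ x * x = φ x := by
  simp [displacement]

theorem displacement_mem_lowerCentralSeries_succ {φ : MulAut G}
    (hφ : ∀ g, displacement φ g ∈ (⊤ : Subgroup G).lowerCentralSeries 1) {i : ℕ} {x : G}
    (hx : x ∈ (⊤ : Subgroup G).lowerCentralSeries i) :
    displacement φ x ∈ (⊤ : Subgroup G).lowerCentralSeries (i + 1) := by
  induction i generalizing x with
  | zero => exact hφ x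
  | succ i ih =>
    set π := QuotientGroup.mk' ((⊤ : Subgroup G).lowerCentralSeries (i + 2))
    suffices (⊤ : Subgroup G).lowerCentralSeries (i + 1) ≤
        MonoidHom.eqLocus (π.comp φ.toMonoidHom) π by
      simpa [displacement, div_eq_mul_inv] using QuotientGroup.eq_iff_div_mem.mp (this hx)
    refine Subgroup.commutator_le.mpr fun y hy z _ => ?_
    have hcomm : ⁅y, displacement φ z⁆ ∈ (⊤ : Subgroup G).lowerCentralSeries (i + 2) :=
      Subgroup.commutator_lowerCentralSeries_le i 1 (Subgroup.commutator_mem_commutator hy (hφ z))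
    have hyz : ⁅y, z⁆ ∈ (⊤ : Subgroup G).lowerCentralSeries (i + 1) :=
      Subgroup.commutator_mem_commutator hy (Subgroup.mem_top z)
    calc π (φ ⁅y, z⁆) = ⁅π (displacement φ y) * π y, π (displacement φ z) * π z⁆ := by
          simp only [map_commutatorElement, ← map_mul, displacement_mul_self]
      _ = ⁅π y, π z⁆ := commutatorElement_mul_mul_of_mem_center
          (mk_mem_center_of_mem_lowerCentralSeries (ih hy))
          (QuotientGroup.commute_mk_of_commutatorElement_mem hcomm)
          (by rw [← map_commutatorElement]; exact mk_mem_center_of_mem_lowerCentralSeries hyz)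
      _ = π ⁅y, z⁆ := (map_commutatorElement π y z).symm

theorem displacement_iterate_mem_lowerCentralSeries {φ : MulAut G}
    (hφ : ∀ g, displacement φ g ∈ (⊤ : Subgroup G).lowerCentralSeries 1) (j : ℕ) (x : G) :
    (displacement φ)^[j] x ∈ (⊤ : Subgroup G).lowerCentralSeries j := by
  induction j with
  | zero => exact Subgroup.mem_top x
  | succ j ih =>
    rw [Function.iterate_succ_apply']
    exact displacement_mem_lowerCentralSeries_succ hφ ih

theorem displacement_iterate_eq_one [Group.IsNilpotent G] {φ : MulAut G}
    (hφ : ∀ g, displacement φ g ∈ (⊤ : Subgroup G).lowerCentralSeries 1) {j : ℕ}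
    (hj : Group.nilpotencyClass G ≤ j) (x : G) : (displacement φ)^[j] x = 1 := by
  have := Subgroup.lowerCentralSeries_antitone _ hj
    (displacement_iterate_mem_lowerCentralSeries hφ j x)
  rwa [Subgroup.lowerCentralSeries_nilpotencyClass, Subgroup.mem_bot] at this

theorem pow_succ_apply_eq_mul (φ : MulAut G) (n : ℕ) (x : G) :
    (φ ^ (n + 1)) x = (φ ^ n) (displacement φ x) * (φ ^ n) x := by
  rw [pow_succ, MulAut.mul_apply, ← displacement_mul_self φ x, map_mul]

theorem le_mul_succ_pow_of_iterate_displacement_eq_one {L : G → ℕ}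
    (hL : ∀ a b, L (a * b) ≤ L a + L b) (φ : MulAut G) {d : ℕ} {x : G}
    (hx : (displacement φ)^[d + 1] x = 1) {B : ℕ}
    (hB : ∀ j ≤ d, L ((displacement φ)^[j] x) ≤ B) (n : ℕ) :
    L ((φ ^ n) x) ≤ B * (n + 1) ^ d := by
  induction d generalizing x n with
  | zero =>
    have hfix : ∀ n, (φ ^ n) x = x := fun n => by
      induction n with
      | zero => rfl
      | succ n ih =>
        rw [pow_succ_apply_eq_mul, show displacement φ x = 1 from hx, map_one, one_mul, ih]
    simpa [hfix] using hB 0 le_rfl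
  | succ d ihd =>
    have hDx := ihd (x := displacement φ x) hx fun j hj => hB (j + 1) (by omega)
    induction n with
    | zero => simpa using hB 0 (Nat.zero_le _)
    | succ n ihn =>
      calc L ((φ ^ (n + 1)) x) ≤ L ((φ ^ n) (displacement φ x)) + L ((φ ^ n) x) := by
            rw [pow_succ_apply_eq_mul]; exact hL _ _
        _ ≤ B * (n + 1) ^ d + B * (n + 1) ^ (d + 1) := add_le_add (hDx n) ihn
        _ = B * ((n + 1) ^ d * (n + 2)) := by ring
        _ ≤ B * ((n + 2) ^ d * (n + 2)) := by gcongr; omega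
        _ = B * (n + 1 + 1) ^ (d + 1) := by ring

end Displacement

section WordLength

variable {G : Type*} [Group G] {S : Set G}

theorem exists_list_length_eq_wordLength (hgen : Subgroup.closure S = ⊤) (g : G) :
    ∃ l : List G, (∀ x ∈ l, x ∈ S ∨ x⁻¹ ∈ S) ∧ l.length = wordLength S g ∧ l.prod = g := by
  have hg : g ∈ Submonoid.closure (S ∪ S⁻¹) := by
    rw [← Subgroup.closure_toSubmonoid, hgen]; exact Subgroup.mem_top g
  obtain ⟨l, hl, hprod⟩ := Submonoid.exists_list_of_mem_closure hg
  exact Nat.sInf_mem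
    (s := {n | ∃ l : List G, (∀ x ∈ l, x ∈ S ∨ x⁻¹ ∈ S) ∧ l.length = n ∧ l.prod = g})
    ⟨l.length, l, hl, rfl, hprod⟩

theorem wordLength_mul_le (hgen : Subgroup.closure S = ⊤) (g h : G) :
    wordLength S (g * h) ≤ wordLength S g + wordLength S h := by
  obtain ⟨l₁, hS₁, hlen₁, rfl⟩ := exists_list_length_eq_wordLength hgen g
  obtain ⟨l₂, hS₂, hlen₂, rfl⟩ := exists_list_length_eq_wordLength hgen h
  rw [← hlen₁, ← hlen₂, ← List.length_append, ← List.prod_append]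
  exact Nat.sInf_le
    ⟨l₁ ++ l₂, fun x hx => (List.mem_append.mp hx).elim (hS₁ x) (hS₂ x), rfl, rfl⟩

theorem wordLength_pow_apply_le_mul_pow [Group.IsNilpotent G] (hgen : Subgroup.closure S = ⊤)
    {φ : MulAut G} (hφ : ∀ g, displacement φ g ∈ (⊤ : Subgroup G).lowerCentralSeries 1)
    (g : G) :
    ∃ M : ℝ, 0 < M ∧ ∀ n : ℕ, 1 ≤ n →
      (wordLength S ((φ ^ n) g) : ℝ) ≤ M * (n : ℝ) ^ (Group.nilpotencyClass G - 1) := by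
  set k := Group.nilpotencyClass G
  set B := (Finset.Iic (k - 1)).sup fun j => wordLength S ((displacement φ)^[j] g)
  have hbound := le_mul_succ_pow_of_iterate_displacement_eq_one (wordLength_mul_le hgen) φ
    (displacement_iterate_eq_one hφ (by omega) g)
    (B := B) fun j hj => Finset.le_sup (f := fun j => wordLength S ((displacement φ)^[j] g))
      (Finset.mem_Iic.mpr hj)
  refine ⟨(B + 1) * 2 ^ (k - 1), by positivity, fun n hn => ?_⟩
  have hn : (n : ℝ) + 1 ≤ 2 * n := by
    have : (1 : ℝ) ≤ n := by exact_mod_cast hn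
    linarith
  calc (wordLength S ((φ ^ n) g) : ℝ) ≤ B * ((n : ℝ) + 1) ^ (k - 1) := by
        exact_mod_cast hbound n
    _ ≤ (B + 1) * (2 * n) ^ (k - 1) := by gcongr; linarith
    _ = (B + 1) * 2 ^ (k - 1) * (n : ℝ) ^ (k - 1) := by ring

end WordLength

theorem tendsto_max_one_rpow_one_div_of_le_mul_pow {a : ℕ → ℕ} {M : ℝ} {d : ℕ}
    (ha : ∀ n : ℕ, 1 ≤ n → (a n : ℝ) ≤ M * (n : ℝ) ^ d) :
    Tendsto (fun n : ℕ => ((max (a n) 1 : ℕ) : ℝ) ^ (1 / (n : ℝ))) atTop (𝓝 1) := by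
  set C := |M| + 1
  have hC : 0 < C := by positivity
  have hupper : Tendsto (fun n : ℕ => C ^ (1 / (n : ℝ)) * ((n : ℝ) ^ (1 / (n : ℝ))) ^ d)
      atTop (𝓝 1) := by
    have hCn := (tendsto_const_nhds (x := C)).rpow tendsto_one_div_atTop_nhds_zero_nat
      (Or.inl hC.ne')
    have hnn := (tendsto_rpow_div.comp tendsto_natCast_atTop_atTop).pow d
    simpa using hCn.mul hnn
  refine tendsto_of_tendsto_of_tendsto_of_le_of_le' tendsto_const_nhds hupper
    (Eventually.of_forall fun n => Real.one_le_rpow (by simp) (by positivity)) ?_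
  filter_upwards [eventually_ge_atTop 1] with n hn
  have hpow : (1 : ℝ) ≤ (n : ℝ) ^ d := one_le_pow₀ (by exact_mod_cast hn)
  have hmax : ((max (a n) 1 : ℕ) : ℝ) ≤ C * (n : ℝ) ^ d := by
    push_cast
    refine max_le ((ha n hn).trans ?_) ?_
    · gcongr; exact (le_abs_self M).trans (by linarith)
    · nlinarith [abs_nonneg M]
  calc ((max (a n) 1 : ℕ) : ℝ) ^ (1 / (n : ℝ)) ≤ (C * (n : ℝ) ^ d) ^ (1 / (n : ℝ)) :=
        Real.rpow_le_rpow (by positivity) hmax (by positivity)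
    _ = C ^ (1 / (n : ℝ)) * ((n : ℝ) ^ (1 / (n : ℝ))) ^ d := by
      rw [Real.mul_rpow hC.le (by positivity), ← Real.rpow_natCast, ← Real.rpow_natCast,
        ← Real.rpow_mul (by positivity), ← Real.rpow_mul (by positivity), mul_comm (d : ℝ)]

theorem Real.biSup_eq_of_forall {ι : Type*} {S : Set ι} (hS : S.Nonempty) {f : ι → ℝ} {c : ℝ}
    (hc : 0 ≤ c) (hf : ∀ s ∈ S, f s = c) : ⨆ s ∈ S, f s = c := by
  have hle : ∀ s, ⨆ _ : s ∈ S, f s ≤ c := fun s => Real.iSup_le (fun hs => (hf s hs).le) hc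
  obtain ⟨s₀, hs₀⟩ := hS
  refine le_antisymm (Real.iSup_le hle hc) ?_
  refine le_ciSup_of_le ⟨c, ?_⟩ s₀ (by rw [ciSup_pos hs₀, hf s₀ hs₀])
  rintro _ ⟨s, rfl⟩
  exact hle s

theorem stmt13_general {N : Type*} [Group N] [Group.IsNilpotent N] (S : Set N)
    (hSne : S.Nonempty) (hgen : Subgroup.closure S = ⊤)
    (k : ℕ) (hk : Group.nilpotencyClass N = k)
    (φ : MulAut N) (htriv : ∀ g : N, φ g * g⁻¹ ∈ (⊤ : Subgroup N).lowerCentralSeries 1) :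
    (∀ g : N, ∃ M : ℝ, 0 < M ∧ ∀ n : ℕ, 1 ≤ n →
      (wordLength S ((φ ^ n) g) : ℝ) ≤ M * (n : ℝ) ^ (k - 1)) ∧
    entropy S φ = 1 := by
  have hpoly := fun g => hk ▸ wordLength_pow_apply_le_mul_pow hgen htriv g
  refine ⟨hpoly, Real.biSup_eq_of_forall hSne zero_le_one fun s _ => ?_⟩
  obtain ⟨M, -, hM⟩ := hpoly s
  exact (tendsto_max_one_rpow_one_div_of_le_mul_pow hM).limsup_eq

theorem stmt13 {N : Type*} [Group N] [Group.IsNilpotent N] (S : Set N) (hS : S.Finite)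
    (hSne : S.Nonempty) (hgen : Subgroup.closure S = ⊤)
    (htf : ∀ g : N, g ≠ 1 → ¬IsOfFinOrder g) (k : ℕ) (hk : Group.nilpotencyClass N = k)
    (φ : MulAut N) (htriv : ∀ g : N, φ g * g⁻¹ ∈ (⊤ : Subgroup N).lowerCentralSeries 1) :
    (∀ g : N, ∃ M : ℝ, 0 < M ∧ ∀ n : ℕ, 1 ≤ n →
      (wordLength S ((φ ^ n) g) : ℝ) ≤ M * (n : ℝ) ^ (k - 1)) ∧
    entropy S φ = 1 :=
  stmt13_general S hSne hgen k hk φ htriv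
end
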